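/- Let 𝒟 = P(X₁) × ⋯ × P(X_s) with finite alphabets X_i and fixed weights α_i > 0, and let 𝒫₀ ⊆ interior(𝒟) be bounded away from the boundary. For P₀ ∈ 𝒫₀ and r ≥ 0 let B_r(P₀) = { Q ∈ 𝒟 : Σ_i α_i D(Q_i‖P₀_i) < r }. Given any bounded λ : 𝒫₀ → (0,∞), define Ω₀ = ⋃_{P₀ ∈ 𝒫₀} B_{λ(P₀)}(P₀) and, assuming Ω₀ ≠ 𝒟, define λ̄(P₀) = sup{ r ≥ 0 : B_r(P₀) ⊆ Ω₀ } for P₀ ∈ closure(𝒫₀). Then λ̄ is continuous on closure(𝒫₀), λ̄|_{𝒫₀} ≥ λ pointwise, and ⋃_{P₀ ∈ 𝒫₀} B_{λ̄(P₀)}(P₀) = Ω₀. -/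

import Mathlib

open scoped BigOperators

/-- KL divergence (base-2 logarithms) between finitely supported distributions. -/
noncomputable def KL {X : Type*} [Fintype X] (P Q : X → ℝ) : ℝ :=
  ∑ x, P x * Real.logb 2 (P x / Q x)

def IsProb {X : Type*} [Fintype X] (P : X → ℝ) : Prop :=
  (∀ x, 0 ≤ P x) ∧ ∑ x, P x = 1

/-!
For `P₀ ∈ closure 𝒫₀` the divergence `g(Q, P₀) = Σ_i α_i D(Q_i‖P₀_i)` is nonnegative and
jointly continuous, since `P₀` stays away from the boundary. Let `K = 𝒟 \ Ω₀`; it is compact and,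
as `Ω₀ ≠ 𝒟`, nonempty. A ball `B_r(P₀)` lies in `Ω₀` exactly when `r ≤ g(Q, P₀)` for all
`Q ∈ K`, so `λ̄(P₀) = min_{Q ∈ K} g(Q, P₀)`. A minimum over a compact set of a jointly continuous
function is continuous in the parameter; `B_{λ(P₀)}(P₀) ⊆ Ω₀` gives `λ ≤ λ̄`, and the balls
`B_{λ̄(P₀)}(P₀)` miss `K`, i.e. lie in `Ω₀`.
-/

open Set Real InformationTheory

lemma sub_le_mul_log_div {q p : ℝ} (hq : 0 ≤ q) (hp : 0 < p) : q - p ≤ q * log (q / p) := by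
  have h := mul_nonneg hp.le (klFun_nonneg (div_nonneg hq hp.le))
  have hkl : p * klFun (q / p) = q * log (q / p) + p - q := by
    rw [klFun_apply]
    field_simp
  linarith

lemma KL_nonneg {X : Type*} [Fintype X] {Q P : X → ℝ} (hQ : ∀ x, 0 ≤ Q x) (hP : ∀ x, 0 < P x)
    (hmass : ∑ x, P x ≤ ∑ x, Q x) : 0 ≤ KL Q P := by
  have hlog : 0 ≤ ∑ x, Q x * log (Q x / P x) := by
    have := Finset.sum_le_sum fun x (_ : x ∈ Finset.univ) => sub_le_mul_log_div (hQ x) (hP x)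
    rw [Finset.sum_sub_distrib] at this
    linarith
  have hKL : KL Q P = (∑ x, Q x * log (Q x / P x)) / log 2 := by
    simp only [KL, logb, Finset.sum_div, mul_div_assoc]
  rw [hKL]
  exact div_nonneg hlog (log_nonneg one_le_two)

lemma isCompact_setOf_forall_isProb {ι : Type*} (X : ι → Type*) [∀ i, Fintype (X i)] :
    IsCompact {Q : ∀ i, X i → ℝ | ∀ i, IsProb (Q i)} := by
  convert isCompact_univ_pi fun i => isCompact_stdSimplex ℝ (X i)
  ext Q
  simp [IsProb, stdSimplex]

lemma continuousOn_mul_logb_div (b : ℝ) :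
    ContinuousOn (fun p : ℝ × ℝ => p.1 * logb b (p.1 / p.2)) {p | p.2 ≠ 0} := by
  have h : ContinuousOn (fun p : ℝ × ℝ => p.2 * ((p.1 / p.2) * log (p.1 / p.2)) / log b)
      {p | p.2 ≠ 0} :=
    (continuousOn_snd.mul (continuous_mul_log.comp_continuousOn
      (continuousOn_fst.div continuousOn_snd fun _ hp => hp))).div_const _
  refine h.congr fun p (hp : p.2 ≠ 0) => ?_
  rw [logb]
  field_simp

lemma continuousOn_sum_mul_KL {ι : Type*} [Fintype ι] (X : ι → Type*) [∀ i, Fintype (X i)]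
    (α : ι → ℝ) :
    ContinuousOn (fun p : (∀ i, X i → ℝ) × (∀ i, X i → ℝ) => ∑ i, α i * KL (p.1 i) (p.2 i))
      {p | ∀ i x, p.2 i x ≠ 0} := by
  refine continuousOn_finsetSum _ fun i _ => continuousOn_const.mul ?_
  refine continuousOn_finsetSum _ fun x _ => ?_
  have hcoord : Continuous fun p : (∀ i, X i → ℝ) × (∀ i, X i → ℝ) => (p.1 i x, p.2 i x) := by
    fun_prop
  exact (continuousOn_mul_logb_div 2).comp hcoord.continuousOn fun p hp => hp i x

lemma IsCompact.continuousOn_sInf_image {α β γ : Type*} [TopologicalSpace α] [TopologicalSpace β]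
    [ConditionallyCompleteLinearOrder γ] [TopologicalSpace γ] [OrderTopology γ]
    {g : α → β → γ} {K : Set α} {C : Set β} (hK : IsCompact K)
    (hg : ContinuousOn (fun p : α × β => g p.1 p.2) (univ ×ˢ C)) :
    ContinuousOn (fun y => sInf ((g · y) '' K)) C := by
  rw [continuousOn_iff_continuous_domRestrict]
  exact hK.continuous_sInf (f := fun (y : C) q => g q y)
    (hg.comp_continuous (f := fun p : C × α => (p.2, (p.1 : β))) (by fun_prop)
      fun p => ⟨mem_univ _, p.1.2⟩)

section SublevelRadius

variable {α : Type*} {S Ω : Set α} {h : α → ℝ}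

lemma le_sInf_image_diff_of_sublevel_subset (hK : (S \ Ω).Nonempty) {r : ℝ}
    (hr : {q ∈ S | h q < r} ⊆ Ω) : r ≤ sInf (h '' (S \ Ω)) := by
  refine le_csInf (hK.image h) ?_
  rintro _ ⟨q, ⟨hqS, hqΩ⟩, rfl⟩
  by_contra! hlt
  exact hqΩ (hr ⟨hqS, hlt⟩)

lemma sublevel_sInf_image_diff_subset (hbdd : BddBelow (h '' (S \ Ω))) :
    {q ∈ S | h q < sInf (h '' (S \ Ω))} ⊆ Ω := by
  intro q ⟨hqS, hlt⟩
  by_contra hqΩ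
  exact (csInf_le hbdd ⟨q, ⟨hqS, hqΩ⟩, rfl⟩).not_gt hlt

lemma sSup_setOf_sublevel_subset_eq_sInf (hK : (S \ Ω).Nonempty)
    (hnonneg : ∀ q ∈ S \ Ω, 0 ≤ h q) :
    sSup {r : ℝ | 0 ≤ r ∧ {q ∈ S | h q < r} ⊆ Ω} = sInf (h '' (S \ Ω)) := by
  have hbdd : BddBelow (h '' (S \ Ω)) := ⟨0, forall_mem_image.2 hnonneg⟩
  have hIcc : {r : ℝ | 0 ≤ r ∧ {q ∈ S | h q < r} ⊆ Ω} = Icc 0 (sInf (h '' (S \ Ω))) := by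
    ext r
    refine ⟨fun ⟨hr0, hr⟩ => ⟨hr0, le_sInf_image_diff_of_sublevel_subset hK hr⟩,
      fun ⟨hr0, hr⟩ => ⟨hr0, ?_⟩⟩
    exact fun q hq => sublevel_sInf_image_diff_subset hbdd ⟨hq.1, hq.2.trans_le hr⟩
  rw [hIcc, csSup_Icc (le_csInf (hK.image h) (forall_mem_image.2 hnonneg))]

end SublevelRadius

theorem stmt19_general {s : ℕ} (X : Fin s → Type*) [∀ i, Fintype (X i)]
    (α : Fin s → ℝ) (hα : ∀ i, 0 < α i)
    (𝒫₀ : Set (∀ i, X i → ℝ))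
    (h₀prob : ∀ P ∈ closure 𝒫₀, ∀ i, IsProb (P i))
    (hbdd : ∃ δ > 0, ∀ P ∈ closure 𝒫₀, ∀ i, ∀ x, δ ≤ P i x)
    (lam : (∀ i, X i → ℝ) → ℝ) :
    let D : Set (∀ i, X i → ℝ) := {Q | ∀ i, IsProb (Q i)}
    let B : ℝ → (∀ i, X i → ℝ) → Set (∀ i, X i → ℝ) :=
      fun r P => {Q ∈ D | ∑ i, α i * KL (Q i) (P i) < r}
    (⋃ P ∈ 𝒫₀, B (lam P) P) ≠ D →
    let lambar : (∀ i, X i → ℝ) → ℝ :=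
      fun P => sSup {r : ℝ | 0 ≤ r ∧ B r P ⊆ ⋃ P' ∈ 𝒫₀, B (lam P') P'}
    ContinuousOn lambar (closure 𝒫₀) ∧
    (∀ P ∈ 𝒫₀, lam P ≤ lambar P) ∧
    (⋃ P ∈ 𝒫₀, B (lambar P) P) = ⋃ P ∈ 𝒫₀, B (lam P) P := by
  intro D B hne lambar
  obtain ⟨δ, hδ, hδle⟩ := hbdd
  set Ω := ⋃ P ∈ 𝒫₀, B (lam P) P
  set g : (∀ i, X i → ℝ) → (∀ i, X i → ℝ) → ℝ := fun Q P => ∑ i, α i * KL (Q i) (P i)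
  have hpos : ∀ P ∈ closure 𝒫₀, ∀ i x, 0 < P i x := fun P hP i x => hδ.trans_le (hδle P hP i x)
  have hg : ContinuousOn (fun p => g p.1 p.2) (univ ×ˢ closure 𝒫₀) :=
    (continuousOn_sum_mul_KL X α).mono fun p hp i x => (hpos p.2 hp.2 i x).ne'
  have hΩ : Ω = D ∩ ⋃ P ∈ 𝒫₀, {Q | g Q P < lam P} := by
    ext Q
    simp only [Ω, B, mem_iUnion, mem_inter_iff, mem_ofPred_eq, exists_and_left, exists_prop]
    tauto
  have hK : IsCompact (D \ Ω) := by
    rw [hΩ, sdiff_self_inter]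
    refine (isCompact_setOf_forall_isProb X).diff (isOpen_biUnion fun P hP => isOpen_lt ?_ ?_)
    · exact hg.comp_continuous (f := fun Q => (Q, P)) (by fun_prop)
        fun Q => ⟨mem_univ Q, subset_closure hP⟩
    · exact continuous_const
  have hKne : (D \ Ω).Nonempty :=
    sdiff_nonempty.2 fun hDΩ => hne (subset_antisymm (iUnion₂_subset fun _ _ => sep_subset _ _) hDΩ)
  have hnonneg : ∀ P ∈ closure 𝒫₀, ∀ Q ∈ D, 0 ≤ g Q P := fun P hP Q hQ =>
    Finset.sum_nonneg fun i _ => mul_nonneg (hα i).le <|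
      KL_nonneg (hQ i).1 (hpos P hP i) (by rw [(hQ i).2, (h₀prob P hP i).2])
  have hlambar : ∀ P ∈ closure 𝒫₀, lambar P = sInf ((g · P) '' (D \ Ω)) := fun P hP =>
    sSup_setOf_sublevel_subset_eq_sInf hKne fun Q hQ => hnonneg P hP Q hQ.1
  have hlam : ∀ P ∈ 𝒫₀, lam P ≤ lambar P := fun P hP => by
    rw [hlambar P (subset_closure hP)]
    exact le_sInf_image_diff_of_sublevel_subset hKne (subset_biUnion_of_mem (u := fun P' => B (lam P') P') hP)
  refine ⟨(hK.continuousOn_sInf_image hg).congr hlambar, hlam, subset_antisymm ?_ ?_⟩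
  · refine iUnion₂_subset fun P hP => ?_
    rw [hlambar P (subset_closure hP)]
    exact sublevel_sInf_image_diff_subset
      ⟨0, forall_mem_image.2 fun Q hQ => hnonneg P (subset_closure hP) Q hQ.1⟩
  · exact biUnion_mono subset_rfl fun P hP Q hQ => ⟨hQ.1, hQ.2.trans_le (hlam P hP)⟩

/-- Given a bounded `λ : 𝒫₀ → (0,∞)` on a `𝒫₀` bounded away from the boundary
of the product simplex `𝒟`, with `Ω₀ = ⋃_{P₀} B_{λ(P₀)}(P₀) ≠ 𝒟`, the function
`λ̄(P₀) = sup{ r ≥ 0 : B_r(P₀) ⊆ Ω₀ }` is continuous on `closure 𝒫₀`,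
dominates `λ` on `𝒫₀`, and generates the same region `Ω₀`. -/
theorem stmt19 {s : ℕ} (X : Fin s → Type*) [∀ i, Fintype (X i)]
    (α : Fin s → ℝ) (hα : ∀ i, 0 < α i)
    (𝒫₀ : Set (∀ i, X i → ℝ))
    (h₀prob : ∀ P ∈ closure 𝒫₀, ∀ i, IsProb (P i))
    (hbdd : ∃ δ > 0, ∀ P ∈ closure 𝒫₀, ∀ i, ∀ x, δ ≤ P i x)
    (lam : (∀ i, X i → ℝ) → ℝ)
    (hlampos : ∀ P ∈ 𝒫₀, 0 < lam P)
    (hlambdd : ∃ C : ℝ, ∀ P ∈ 𝒫₀, lam P ≤ C) :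
    let D : Set (∀ i, X i → ℝ) := {Q | ∀ i, IsProb (Q i)}
    let B : ℝ → (∀ i, X i → ℝ) → Set (∀ i, X i → ℝ) :=
      fun r P => {Q ∈ D | ∑ i, α i * KL (Q i) (P i) < r}
    (⋃ P ∈ 𝒫₀, B (lam P) P) ≠ D →
    let lambar : (∀ i, X i → ℝ) → ℝ :=
      fun P => sSup {r : ℝ | 0 ≤ r ∧ B r P ⊆ ⋃ P' ∈ 𝒫₀, B (lam P') P'}
    ContinuousOn lambar (closure 𝒫₀) ∧
    (∀ P ∈ 𝒫₀, lam P ≤ lambar P) ∧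
    (⋃ P ∈ 𝒫₀, B (lambar P) P) = ⋃ P ∈ 𝒫₀, B (lam P) P :=
  stmt19_general X α hα 𝒫₀ h₀prob hbdd lam
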